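/- Let V = {(x,y) ∈ ℝ² : y³ = (1-x²)y} and E = {(x,y) ∈ V : x ∈ [-1,1]}. For every polynomial P(x,y) = G₀(x) + G₁(x)y + G₂(x)y², one has sup_E |∂P/∂y| ≤ 2 (deg P)² sup_E |P|. -/

import Mathlib

/-!
The points `(cos θ, ± sin θ)` and `(cos θ, 0)` lie in `E`. Comparing `P` at the first two gives
`|G₁(cos θ) sin θ| ≤ C`, and bringing in the third gives `|t(θ) sin θ| ≤ 4C` for
`t(θ) = ∂P/∂y (cos θ, sin θ)`. Both `G₁(cos θ)` and `t` are trigonometric polynomials of degree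
`< d = deg P`, so everything reduces to a Schur-type inequality: a trigonometric polynomial `t` of
degree `< n` with `|t(θ) sin θ| ≤ A` satisfies `|t| ≤ √2 n A`. For this, interpolate `t` at the
`2n` zeros `τⱼ` of `cos (nθ)` against the Dirichlet kernel, use `|t(τⱼ)| ≤ A |sin (nτⱼ) / sin τⱼ|`,
and apply Cauchy–Schwarz; both sums of squares are evaluated by the discrete Parseval identity at
the nodes. This gives `|∂P/∂y| ≤ √2 d C` on the segment and `4√2 d C ≤ 2 d² C` on the circle when
`d ≥ 3`; when `d = 2` the coefficient `G₂` is a constant, bounded directly.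
-/

def E9 : Set (ℝ × ℝ) := {p | p.2 ^ 3 = (1 - p.1 ^ 2) * p.2 ∧ p.1 ∈ Set.Icc (-1 : ℝ) 1}

open Finset Real Complex ComplexConjugate Polynomial

noncomputable section

def expChar (k : ℤ) (θ : ℝ) : ℂ := Complex.exp (↑(k * θ) * I)

lemma expChar_add (k l : ℤ) (θ : ℝ) : expChar (k + l) θ = expChar k θ * expChar l θ := by
  simp only [expChar, ← Complex.exp_add]
  push_cast
  ring_nf

lemma expChar_zero (θ : ℝ) : expChar 0 θ = 1 := by
  simp [expChar]

lemma expChar_sub (k : ℤ) (a b : ℝ) : expChar k (a - b) = expChar (-k) b * expChar k a := by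
  simp only [expChar, ← Complex.exp_add]
  push_cast
  ring_nf

lemma norm_expChar (k : ℤ) (θ : ℝ) : ‖expChar k θ‖ = 1 :=
  Complex.norm_exp_ofReal_mul_I _

lemma conj_expChar (k : ℤ) (θ : ℝ) : conj (expChar k θ) = expChar (-k) θ := by
  simp only [expChar, ← Complex.exp_conj, map_mul, Complex.conj_ofReal, Complex.conj_I]
  push_cast
  ring_nf

lemma cos_eq_expChar (θ : ℝ) : (Real.cos θ : ℂ) = (expChar 1 θ + expChar (-1) θ) / 2 := by
  simp only [expChar, Complex.ofReal_cos]
  push_cast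
  rw [one_mul, neg_one_mul]
  linear_combination Complex.two_cos (θ : ℂ) / 2

lemma sin_eq_expChar (θ : ℝ) : (Real.sin θ : ℂ) = (expChar 1 θ - expChar (-1) θ) / (2 * I) := by
  simp only [expChar, Complex.ofReal_sin]
  push_cast
  rw [one_mul, neg_one_mul, eq_div_iff (mul_ne_zero two_ne_zero I_ne_zero)]
  linear_combination I * Complex.two_sin (θ : ℂ) + (cexp (-θ * I) - cexp (θ * I)) * I_sq

def chebNode (n j : ℕ) : ℝ := (2 * j + 1) * π / (2 * n)

lemma sum_expChar_chebNode {n : ℕ} {r : ℤ} (hr : r.natAbs < 2 * n) :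
    ∑ j ∈ range (2 * n), expChar r (chebNode n j) = if r = 0 then (2 * n : ℂ) else 0 := by
  split_ifs with hr0
  · simp [hr0, expChar_zero]
  have hn : 2 * n ≠ 0 := by omega
  set ζ := Complex.exp (2 * π * I / (2 * n : ℕ))
  have hζ : IsPrimitiveRoot ζ (2 * n) := Complex.isPrimitiveRoot_exp _ hn
  have hterm (j : ℕ) : expChar r (chebNode n j) = expChar r (chebNode n 0) * (ζ ^ r) ^ j := by
    simp only [expChar, chebNode, ζ, ← Complex.exp_int_mul, ← Complex.exp_nat_mul,
      ← Complex.exp_add]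
    congr 1
    push_cast
    field_simp
    ring
  have hζr : ζ ^ r ≠ 1 := fun h => hr0 <|
    Int.eq_zero_of_dvd_of_natAbs_lt_natAbs ((hζ.zpow_eq_one_iff_dvd r).mp h) (by omega)
  have hζr2n : (ζ ^ r) ^ (2 * n) = 1 := by
    rw [← zpow_natCast, ← zpow_mul, mul_comm, zpow_mul, zpow_natCast, hζ.pow_eq_one, one_zpow]
  rw [sum_congr rfl fun j _ => hterm j, ← mul_sum, geom_sum_eq hζr, hζr2n]
  simp

def trigPoly (m : ℕ) : Submodule ℂ (ℝ → ℂ) :=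
  Submodule.span ℂ (expChar '' {k | k.natAbs ≤ m})

lemma expChar_mem_trigPoly {k : ℤ} {m : ℕ} (hk : k.natAbs ≤ m) : expChar k ∈ trigPoly m :=
  Submodule.subset_span ⟨k, hk, rfl⟩

lemma trigPoly_mono {m m' : ℕ} (h : m ≤ m') : trigPoly m ≤ trigPoly m' :=
  Submodule.span_mono <| Set.image_mono fun _ hk => le_trans hk h

lemma trigPoly_mul_le (m m' : ℕ) : trigPoly m * trigPoly m' ≤ trigPoly (m + m') := by
  rw [trigPoly, trigPoly, Submodule.span_mul_span]
  refine Submodule.span_le.mpr ?_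
  rintro _ ⟨_, ⟨k, hk, rfl⟩, _, ⟨l, hl, rfl⟩, rfl⟩
  have : expChar k * expChar l = expChar (k + l) := funext fun θ => (expChar_add k l θ).symm
  show expChar k * expChar l ∈ trigPoly (m + m')
  rw [this]
  exact expChar_mem_trigPoly <| (Int.natAbs_add_le k l).trans (add_le_add hk hl)

lemma mul_mem_trigPoly {m m' : ℕ} {f g : ℝ → ℂ} (hf : f ∈ trigPoly m) (hg : g ∈ trigPoly m') :
    f * g ∈ trigPoly (m + m') :=
  trigPoly_mul_le m m' (Submodule.mul_mem_mul hf hg)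

lemma one_mem_trigPoly (m : ℕ) : (1 : ℝ → ℂ) ∈ trigPoly m := by
  have : (1 : ℝ → ℂ) = expChar 0 := funext fun θ => (expChar_zero θ).symm
  exact this ▸ expChar_mem_trigPoly (Nat.zero_le m)

lemma cos_mem_trigPoly : (fun θ => (Real.cos θ : ℂ)) ∈ trigPoly 1 := by
  have : (fun θ => (Real.cos θ : ℂ)) = (2⁻¹ : ℂ) • (expChar 1 + expChar (-1)) := by
    ext θ
    simp only [Pi.smul_apply, Pi.add_apply, smul_eq_mul, cos_eq_expChar]
    ring
  rw [this]
  exact Submodule.smul_mem _ _ <|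
    Submodule.add_mem _ (expChar_mem_trigPoly le_rfl) (expChar_mem_trigPoly le_rfl)

lemma sin_mem_trigPoly : (fun θ => (Real.sin θ : ℂ)) ∈ trigPoly 1 := by
  have : (fun θ => (Real.sin θ : ℂ)) = (2 * I)⁻¹ • (expChar 1 - expChar (-1)) := by
    ext θ
    simp only [Pi.smul_apply, Pi.sub_apply, smul_eq_mul, sin_eq_expChar]
    ring
  rw [this]
  exact Submodule.smul_mem _ _ <|
    Submodule.sub_mem _ (expChar_mem_trigPoly le_rfl) (expChar_mem_trigPoly le_rfl)

lemma eval_cos_mem_trigPoly (g : ℝ[X]) :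
    (fun θ => ((g.eval (Real.cos θ) : ℝ) : ℂ)) ∈ trigPoly g.natDegree := by
  have hpow (k : ℕ) : (fun θ => (Real.cos θ : ℂ)) ^ k ∈ trigPoly k := by
    induction k with
    | zero => exact one_mem_trigPoly 0
    | succ k ih =>
      exact pow_succ (fun θ => (Real.cos θ : ℂ)) k ▸ mul_mem_trigPoly ih cos_mem_trigPoly
  have : (fun θ => ((g.eval (Real.cos θ) : ℝ) : ℂ)) =
      ∑ k ∈ range (g.natDegree + 1), (g.coeff k : ℂ) • (fun θ => (Real.cos θ : ℂ)) ^ k := by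
    ext θ
    simp [Polynomial.eval_eq_sum_range]
  rw [this]
  exact Submodule.sum_mem _ fun k hk => Submodule.smul_mem _ _ <|
    trigPoly_mono (Nat.lt_succ_iff.mp (mem_range.mp hk)) (hpow k)

def dirichletKernel (m : ℕ) (t : ℝ) : ℂ := ∑ k ∈ Icc (-m : ℤ) m, expChar k t

lemma dirichletKernel_sub (m : ℕ) (τ φ : ℝ) :
    dirichletKernel m (τ - φ) = ∑ k ∈ Icc (-m : ℤ) m, expChar (-k) φ * expChar k τ := by
  simp only [dirichletKernel, expChar_sub]

lemma sum_dirichletKernel_mul_expChar {m n : ℕ} (hmn : m < n) {l : ℤ} (hl : l.natAbs ≤ m)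
    (φ : ℝ) :
    ∑ j ∈ range (2 * n), dirichletKernel m (chebNode n j - φ) * expChar l (chebNode n j) =
      2 * n * expChar l φ := by
  simp only [dirichletKernel_sub, sum_mul, mul_assoc, ← expChar_add]
  rw [sum_comm]
  simp only [← mul_sum]
  rw [sum_congr rfl fun k hk => by
    rw [sum_expChar_chebNode (by rw [mem_Icc] at hk; omega), mul_ite, mul_zero]]
  simp only [add_eq_zero_iff_eq_neg, sum_ite_eq', mem_Icc, neg_neg]
  rw [if_pos (by omega)]
  ring

theorem eq_sum_dirichletKernel_chebNode {m n : ℕ} (hmn : m < n) {f : ℝ → ℂ}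
    (hf : f ∈ trigPoly m) (φ : ℝ) :
    2 * n * f φ =
      ∑ j ∈ range (2 * n), dirichletKernel m (chebNode n j - φ) * f (chebNode n j) := by
  induction hf using Submodule.span_induction with
  | mem g hg =>
    obtain ⟨l, hl, rfl⟩ := hg
    exact (sum_dirichletKernel_mul_expChar hmn hl φ).symm
  | zero => simp
  | add g h _ _ hg hh => simp only [Pi.add_apply, mul_add, hg, hh, sum_add_distrib]
  | smul c g _ hg =>
    simp only [Pi.smul_apply, smul_eq_mul, mul_left_comm _ c, ← mul_sum, hg]

theorem sum_norm_sq_chebNode {ι : Type*} {n : ℕ} (A : Finset ι) (c : ι → ℂ) {ν : ι → ℤ}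
    (hinj : Set.InjOn ν A) (hν : ∀ k ∈ A, (ν k).natAbs < n) :
    ∑ j ∈ range (2 * n), ‖∑ k ∈ A, c k * expChar (ν k) (chebNode n j)‖ ^ 2 =
      2 * n * ∑ k ∈ A, ‖c k‖ ^ 2 := by
  classical
  have hquad : ∀ k ∈ A, ∀ k' ∈ A,
      ∑ j ∈ range (2 * n), c k * expChar (ν k) (chebNode n j) *
          (conj (c k') * expChar (-ν k') (chebNode n j)) =
        if k' = k then 2 * n * (c k * conj (c k)) else 0 := by
    intro k hk k' hk'
    simp only [mul_mul_mul_comm _ (expChar _ _), ← expChar_add, ← mul_sum]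
    rw [sum_expChar_chebNode (by have := hν k hk; have := hν k' hk'; omega)]
    by_cases h : k' = k
    · rw [h, if_pos (add_neg_cancel _), if_pos rfl]
      ring
    · rw [if_neg (fun h' => h (hinj hk' hk (by omega))), if_neg h, mul_zero]
  apply Complex.ofReal_injective
  push_cast
  simp only [← Complex.mul_conj', map_sum, map_mul, conj_expChar, sum_mul_sum]
  rw [sum_comm, mul_sum]
  refine sum_congr rfl fun k hk => ?_
  rw [sum_comm, sum_congr rfl fun k' hk' => hquad k hk k' hk', sum_ite_eq', if_pos hk]

def sinRatio (n : ℕ) (θ : ℝ) : ℂ := ∑ l ∈ range n, expChar (n - 1 - 2 * l) θ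

lemma sinRatio_mul_sin (n : ℕ) (θ : ℝ) : sinRatio n θ * Real.sin θ = Real.sin (n * θ) := by
  have htel : sinRatio n θ * (expChar 1 θ - expChar (-1) θ) = expChar n θ - expChar (-n) θ := by
    rw [sinRatio, sum_mul]
    have hterm (l : ℕ) : expChar (n - 1 - 2 * l) θ * (expChar 1 θ - expChar (-1) θ) =
        expChar (n - 2 * l) θ - expChar (n - 2 * (l + 1 : ℕ)) θ := by
      rw [mul_sub, ← expChar_add, ← expChar_add]
      push_cast
      ring_nf
    rw [sum_congr rfl fun l _ => hterm l, sum_range_sub' (fun l : ℕ => expChar (n - 2 * l) θ)]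
    push_cast
    ring_nf
  have hsin : (Real.sin (n * θ) : ℂ) = (expChar n θ - expChar (-n) θ) / (2 * I) := by
    simpa [expChar, mul_comm] using sin_eq_expChar (n * θ)
  rw [sin_eq_expChar, hsin, ← htel, mul_div_assoc]

lemma norm_sinRatio_chebNode_mul_sin {n : ℕ} (hn : n ≠ 0) (j : ℕ) :
    ‖sinRatio n (chebNode n j)‖ * |Real.sin (chebNode n j)| = 1 := by
  have : (n : ℝ) * chebNode n j = j * π + π / 2 := by
    rw [chebNode]
    field_simp
  rw [← Real.norm_eq_abs, ← Complex.norm_real, ← norm_mul, sinRatio_mul_sin, this,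
    Complex.norm_real, Real.norm_eq_abs, Real.sin_add_pi_div_two, Real.cos_nat_mul_pi]
  simp

theorem norm_sq_le_of_norm_mul_sin_le {m n : ℕ} (hmn : m < n) {f : ℝ → ℂ}
    (hf : f ∈ trigPoly m) {A : ℝ} (hA : ∀ θ, ‖f θ‖ * |Real.sin θ| ≤ A) (φ : ℝ) :
    ‖f φ‖ ^ 2 ≤ (2 * m + 1) * n * A ^ 2 := by
  have hn : n ≠ 0 := by omega
  have hA0 : 0 ≤ A := (by positivity : (0 : ℝ) ≤ ‖f 0‖ * |Real.sin 0|).trans (hA 0)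
  set D := fun j => ‖dirichletKernel m (chebNode n j - φ)‖
  set S := fun j => ‖sinRatio n (chebNode n j)‖
  have hnode (j : ℕ) : ‖f (chebNode n j)‖ ≤ A * S j := by
    calc ‖f (chebNode n j)‖
        = ‖f (chebNode n j)‖ * |Real.sin (chebNode n j)| * S j := by
          rw [mul_assoc, mul_comm |_|, norm_sinRatio_chebNode_mul_sin hn, mul_one]
      _ ≤ A * S j := mul_le_mul_of_nonneg_right (hA _) (norm_nonneg _)
  have hD : ∑ j ∈ range (2 * n), D j ^ 2 = 2 * n * (2 * m + 1) := by
    simp only [D, dirichletKernel_sub]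
    rw [sum_norm_sq_chebNode (ν := fun k => k) _ _ (fun _ _ _ _ h => h)
      (fun k hk => by rw [mem_Icc] at hk; omega)]
    simp only [norm_expChar, one_pow, sum_const, Int.card_Icc, nsmul_eq_mul, mul_one]
    congr 1
    norm_cast
    omega
  have hS : ∑ j ∈ range (2 * n), S j ^ 2 = 2 * n * n := by
    have hinj : Set.InjOn (fun l : ℕ => (n : ℤ) - 1 - 2 * l) (range n) :=
      fun l _ l' _ h => by simp only at h; omega
    have := sum_norm_sq_chebNode (n := n) (range n) 1 hinj
      (fun l hl => by rw [mem_range] at hl; omega)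
    simpa [S, sinRatio] using this
  have hinterp : 2 * n * ‖f φ‖ ≤ A * ∑ j ∈ range (2 * n), D j * S j := by
    calc 2 * n * ‖f φ‖ = ‖2 * n * f φ‖ := by simp
      _ ≤ ∑ j ∈ range (2 * n), D j * ‖f (chebNode n j)‖ := by
          rw [eq_sum_dirichletKernel_chebNode hmn hf φ]
          exact (norm_sum_le _ _).trans_eq (by simp only [norm_mul, D])
      _ ≤ ∑ j ∈ range (2 * n), D j * (A * S j) :=
          sum_le_sum fun j _ => mul_le_mul_of_nonneg_left (hnode j) (norm_nonneg _)
      _ = A * ∑ j ∈ range (2 * n), D j * S j := by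
          rw [mul_sum]
          exact sum_congr rfl fun j _ => by ring
  have hCS := sum_mul_sq_le_sq_mul_sq (range (2 * n)) D S
  rw [hD, hS] at hCS
  have hn0 : (0 : ℝ) < n := by positivity
  have : (2 * n * ‖f φ‖) ^ 2 ≤ (2 * n) ^ 2 * ((2 * m + 1) * n * A ^ 2) := by
    calc (2 * n * ‖f φ‖) ^ 2 ≤ A ^ 2 * (∑ j ∈ range (2 * n), D j * S j) ^ 2 := by
          rw [← mul_pow]
          exact pow_le_pow_left₀ (by positivity) hinterp 2
      _ ≤ A ^ 2 * (2 * n * (2 * m + 1) * (2 * n * n)) := by gcongr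
      _ = (2 * n) ^ 2 * ((2 * m + 1) * n * A ^ 2) := by ring
  rw [mul_pow] at this
  exact le_of_mul_le_mul_left this (by positivity)

theorem abs_le_sqrt_two_mul_of_abs_mul_sin_le {m n : ℕ} (hmn : m < n) {t : ℝ → ℝ}
    (ht : (fun θ => (t θ : ℂ)) ∈ trigPoly m) {A : ℝ} (hA : ∀ θ, |t θ * Real.sin θ| ≤ A)
    (φ : ℝ) : |t φ| ≤ √2 * n * A := by
  have hA0 : 0 ≤ A := (abs_nonneg _).trans (hA 0)
  have hsq := norm_sq_le_of_norm_mul_sin_le hmn ht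
    (fun θ => by simpa only [Complex.norm_real, Real.norm_eq_abs, abs_mul] using hA θ) φ
  rw [Complex.norm_real, Real.norm_eq_abs, sq_abs] at hsq
  refine abs_le_of_sq_le_sq (hsq.trans ?_) (by positivity)
  have hm : (m : ℝ) + 1 ≤ n := by exact_mod_cast hmn
  calc (2 * m + 1) * n * A ^ 2 ≤ (2 * n) * n * A ^ 2 := by gcongr; linarith
    _ = (√2 * n * A) ^ 2 := by rw [mul_pow, mul_pow, Real.sq_sqrt zero_le_two]; ring

lemma cos_sin_mem_E9 (θ : ℝ) : (Real.cos θ, Real.sin θ) ∈ E9 :=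
  ⟨by linear_combination Real.sin θ * Real.sin_sq_add_cos_sq θ,
    Real.neg_one_le_cos θ, Real.cos_le_one θ⟩

lemma cos_zero_mem_E9 (θ : ℝ) : (Real.cos θ, (0 : ℝ)) ∈ E9 :=
  ⟨by ring, Real.neg_one_le_cos θ, Real.cos_le_one θ⟩

lemma exists_angle_of_mem_E9 {p : ℝ × ℝ} (hp : p ∈ E9) :
    ∃ φ, Real.cos φ = p.1 ∧ (p.2 = 0 ∨ p.2 = Real.sin φ) := by
  obtain ⟨hcubic, hx₁, hx₂⟩ := hp
  have hy : p.2 = 0 ∨ p.2 ^ 2 = 1 - p.1 ^ 2 := by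
    have : p.2 * (p.2 ^ 2 - (1 - p.1 ^ 2)) = 0 := by linear_combination hcubic
    rcases mul_eq_zero.mp this with h | h
    · exact Or.inl h
    · exact Or.inr (by linarith)
  rcases hy with hy | hy
  · exact ⟨Real.arccos p.1, Real.cos_arccos hx₁ hx₂, Or.inl hy⟩
  have hsin : Real.sin (Real.arccos p.1) = |p.2| := by
    rw [Real.sin_arccos, ← hy, Real.sqrt_sq_eq_abs]
  rcases le_or_gt 0 p.2 with hpos | hneg
  · exact ⟨Real.arccos p.1, Real.cos_arccos hx₁ hx₂, Or.inr (by rw [hsin, abs_of_nonneg hpos])⟩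
  · refine ⟨-Real.arccos p.1, by rw [Real.cos_neg, Real.cos_arccos hx₁ hx₂], Or.inr ?_⟩
    rw [Real.sin_neg, hsin, abs_of_neg hneg, neg_neg]

def evalQuadY (G₀ G₁ G₂ : ℝ[X]) (x y : ℝ) : ℝ := G₀.eval x + G₁.eval x * y + G₂.eval x * y ^ 2

section BoundOnE9

variable {G₀ G₁ G₂ : ℝ[X]} {C : ℝ}

lemma abs_eval_cos_mul_sin_le (hC : ∀ p ∈ E9, |evalQuadY G₀ G₁ G₂ p.1 p.2| ≤ C) (θ : ℝ) :
    |G₁.eval (Real.cos θ) * Real.sin θ| ≤ C := by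
  have hup := abs_le.mp (hC _ (cos_sin_mem_E9 θ))
  have hdown := abs_le.mp (hC _ (cos_sin_mem_E9 (-θ)))
  simp only [evalQuadY, Real.cos_neg, Real.sin_neg] at hup hdown
  exact abs_le.mpr ⟨by linarith, by linarith⟩

lemma abs_derivY_mul_sin_le (hC : ∀ p ∈ E9, |evalQuadY G₀ G₁ G₂ p.1 p.2| ≤ C) (θ : ℝ) :
    |(G₁.eval (Real.cos θ) + 2 * G₂.eval (Real.cos θ) * Real.sin θ) * Real.sin θ| ≤ 4 * C := by
  have hup := abs_le.mp (hC _ (cos_sin_mem_E9 θ))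
  have hdown := abs_le.mp (hC _ (cos_sin_mem_E9 (-θ)))
  have hmid := abs_le.mp (hC _ (cos_zero_mem_E9 θ))
  simp only [evalQuadY, Real.cos_neg, Real.sin_neg] at hup hdown hmid
  exact abs_le.mpr ⟨by linarith, by linarith⟩

lemma abs_eval_le_of_natDegree_eq_zero (hC : ∀ p ∈ E9, |evalQuadY G₀ G₁ G₂ p.1 p.2| ≤ C)
    (h : G₂.natDegree = 0) (x : ℝ) : |G₂.eval x| ≤ 2 * C := by
  have hup := abs_le.mp (hC _ (cos_sin_mem_E9 (π / 2)))
  have hdown := abs_le.mp (hC _ (cos_sin_mem_E9 (-(π / 2))))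
  have hmid := abs_le.mp (hC _ (cos_zero_mem_E9 (π / 2)))
  simp only [evalQuadY, Real.cos_neg, Real.sin_neg, Real.cos_pi_div_two, Real.sin_pi_div_two]
    at hup hdown hmid
  rw [Polynomial.eq_C_of_natDegree_eq_zero h] at hup hdown hmid ⊢
  simp only [Polynomial.eval_C] at hup hdown hmid ⊢
  exact abs_le.mpr ⟨by linarith, by linarith⟩

lemma abs_eval_cos_le (hC : ∀ p ∈ E9, |evalQuadY G₀ G₁ G₂ p.1 p.2| ≤ C) {d : ℕ}
    (hd : G₁.natDegree < d) (φ : ℝ) : |G₁.eval (Real.cos φ)| ≤ √2 * d * C :=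
  abs_le_sqrt_two_mul_of_abs_mul_sin_le hd (eval_cos_mem_trigPoly G₁)
    (abs_eval_cos_mul_sin_le hC) φ

lemma abs_derivY_cos_sin_le (hC : ∀ p ∈ E9, |evalQuadY G₀ G₁ G₂ p.1 p.2| ≤ C) {d : ℕ}
    (h₁ : G₁.natDegree < d) (h₂ : G₂.natDegree + 1 < d) (φ : ℝ) :
    |G₁.eval (Real.cos φ) + 2 * G₂.eval (Real.cos φ) * Real.sin φ| ≤ √2 * d * (4 * C) := by
  have hmem : (fun θ => ((G₁.eval (Real.cos θ) + 2 * G₂.eval (Real.cos θ) * Real.sin θ : ℝ) : ℂ))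
      ∈ trigPoly (max G₁.natDegree (G₂.natDegree + 1)) := by
    have h₂ := mul_mem_trigPoly (eval_cos_mem_trigPoly G₂) sin_mem_trigPoly
    convert Submodule.add_mem _ (trigPoly_mono (le_max_left _ _) (eval_cos_mem_trigPoly G₁))
      (Submodule.smul_mem _ (2 : ℂ) (trigPoly_mono (le_max_right _ _) h₂)) using 1
    ext θ
    simp only [Pi.add_apply, Pi.smul_apply, Pi.mul_apply, smul_eq_mul]
    push_cast
    ring
  exact abs_le_sqrt_two_mul_of_abs_mul_sin_le (max_lt h₁ h₂) hmem (abs_derivY_mul_sin_le hC) φ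

lemma abs_derivY_cos_sin_le_of_natDegree_eq_zero
    (hC : ∀ p ∈ E9, |evalQuadY G₀ G₁ G₂ p.1 p.2| ≤ C) (h₁ : G₁.natDegree < 2)
    (h₂ : G₂.natDegree = 0) (φ : ℝ) :
    |G₁.eval (Real.cos φ) + 2 * G₂.eval (Real.cos φ) * Real.sin φ| ≤ 8 * C := by
  have hG₁ : |G₁.eval (Real.cos φ)| ≤ √2 * 2 * C := by exact_mod_cast abs_eval_cos_le hC h₁ φ
  have hG₂ := abs_eval_le_of_natDegree_eq_zero hC h₂ (Real.cos φ)
  have hC₂ : 0 ≤ 2 * C := (abs_nonneg _).trans hG₂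
  have hsin := Real.abs_sin_le_one φ
  have hsqrt : √2 ≤ 2 := Real.sqrt_le_iff.mpr ⟨zero_le_two, by norm_num⟩
  calc |G₁.eval (Real.cos φ) + 2 * G₂.eval (Real.cos φ) * Real.sin φ|
      ≤ |G₁.eval (Real.cos φ)| + 2 * (|G₂.eval (Real.cos φ)| * |Real.sin φ|) := by
        refine (abs_add_le _ _).trans_eq ?_
        rw [abs_mul, abs_mul, abs_two, mul_assoc]
    _ ≤ √2 * 2 * C + 2 * (2 * C * 1) := by gcongr
    _ ≤ 8 * C := by nlinarith

end BoundOnE9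

end

/-- For `P(x,y) = G₀(x) + G₁(x)y + G₂(x)y²`, one has
`sup_E |∂P/∂y| ≤ 2 (deg P)² sup_E |P|`, where `∂P/∂y = G₁(x) + 2G₂(x)y`. -/
theorem markov_y_on_E9 (G₀ G₁ G₂ : Polynomial ℝ) (C : ℝ)
    (hC : ∀ p ∈ E9, |G₀.eval p.1 + G₁.eval p.1 * p.2 + G₂.eval p.1 * p.2 ^ 2| ≤ C) :
    ∀ p ∈ E9,
      |G₁.eval p.1 + 2 * G₂.eval p.1 * p.2|
        ≤ 2 * ((max (max G₀.natDegree (G₁.natDegree + 1)) (G₂.natDegree + 2) : ℕ) : ℝ) ^ 2 * C := by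
  rintro ⟨x, y⟩ hp
  set d := max (max G₀.natDegree (G₁.natDegree + 1)) (G₂.natDegree + 2)
  have h₁ : G₁.natDegree + 1 ≤ d := (le_max_right _ _).trans (le_max_left _ _)
  have h₂ : G₂.natDegree + 2 ≤ d := le_max_right _ _
  have hC₀ : 0 ≤ C := (abs_nonneg _).trans (hC _ hp)
  have hd : (2 : ℝ) ≤ d := by exact_mod_cast (by omega : 2 ≤ d)
  have hsqrt : √2 ≤ 3 / 2 := Real.sqrt_le_iff.mpr ⟨by norm_num, by norm_num⟩
  obtain ⟨φ, rfl, rfl | rfl⟩ := exists_angle_of_mem_E9 hp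
  · rw [mul_zero, add_zero]
    calc |G₁.eval (Real.cos φ)| ≤ √2 * d * C := abs_eval_cos_le hC (by omega) φ
      _ ≤ 2 * d ^ 2 * C := by gcongr ?_ * C; nlinarith
  · rcases (by omega : d = 2 ∨ 3 ≤ d) with hd₂ | hd₃
    · calc _ ≤ 8 * C := abs_derivY_cos_sin_le_of_natDegree_eq_zero hC (by omega) (by omega) φ
        _ = 2 * d ^ 2 * C := by rw [hd₂]; norm_num
    · have hd₃' : (3 : ℝ) ≤ d := by exact_mod_cast hd₃
      calc _ ≤ √2 * d * (4 * C) := abs_derivY_cos_sin_le hC (by omega) (by omega) φ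
        _ = 4 * √2 * d * C := by ring
        _ ≤ 2 * d ^ 2 * C := by gcongr ?_ * C; nlinarith
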